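/- If a = τ(b) in α, then the nanoword ABAB with |A| = a, |B| = b is homotopic to the empty nanoword. -/

import Mathlib

/-! Nanophrases over a set `α` (with involution `τ`) in the sense of Turaev,
with letters drawn from a type `L`.  A phrase is encoded as a single list with
`none` acting as the separator `|` between components; thus the homotopy moves
may modify subwords spanning several components. -/

/-- A nanophrase over `α` with letters in `L`: a projection `L → α` and a word
with separators (`none`) dividing the components. -/
structure NPhrase (α : Type*) (L : Type*) where
  proj : L → α
  word : List (Option L)

namespace NPhrase

/-- The components of a separator-encoded phrase word. -/
def comps {L : Type*} : List (Option L) → List (List L)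
  | [] => [[]]
  | none :: l => [] :: comps l
  | some a :: l =>
      match comps l with
      | [] => [[a]]
      | c :: cs => (a :: c) :: cs

/-- Re-encode a list of components as a separator-encoded phrase word. -/
def ofComps {L : Type*} (cs : List (List L)) : List (Option L) :=
  List.intercalate [none] (cs.map (fun c => c.map some))

/-- The letters of a phrase word (separators removed). -/
def letters {L : Type*} (w : List (Option L)) : List L := w.filterMap id

/-- The Gauss condition: every letter occurs exactly twice or not at all. -/
def IsGauss {α L : Type*} [DecidableEq L] (P : NPhrase α L) : Prop :=
  ∀ x : L, (letters P.word).count x = 0 ∨ (letters P.word).count x = 2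

/-- A list consisting only of separators. -/
def Seps {L : Type*} (s : List (Option L)) : Prop := ∀ x ∈ s, x = none

/-- Isomorphism of nanophrases: a bijective relabelling of the letters which
preserves the projections on the letters actually occurring. -/
def Isomorphic {α L : Type*} (P Q : NPhrase α L) : Prop :=
  ∃ e : L ≃ L, (∀ x ∈ letters P.word, Q.proj (e x) = P.proj x) ∧
    Q.word = P.word.map (Option.map e)

/-- One elementary step of homotopy of nanophrases: an isomorphism or one of the
three homotopy moves (the modified subwords may span several components, i.e.
separators may occur between the displayed consecutive letters). -/
inductive Step {α L : Type*} (τ : α → α) : NPhrase α L → NPhrase α L → Prop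
  | iso (g g' : L → α) (w : List (Option L)) (e : L ≃ L)
      (hg : ∀ x ∈ letters w, g' (e x) = g x) :
      Step τ ⟨g, w⟩ ⟨g', w.map (Option.map e)⟩
  | move1 (g : L → α) (A : L) (x s y : List (Option L)) (hs : Seps s) :
      Step τ ⟨g, x ++ [some A] ++ s ++ [some A] ++ y⟩ ⟨g, x ++ s ++ y⟩
  | move2 (g : L → α) (A B : L) (x s₁ y s₂ z : List (Option L))
      (hs₁ : Seps s₁) (hs₂ : Seps s₂) (hAB : g B = τ (g A)) :
      Step τ ⟨g, x ++ [some A] ++ s₁ ++ [some B] ++ y ++ [some B] ++ s₂ ++ [some A] ++ z⟩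
             ⟨g, x ++ s₁ ++ y ++ s₂ ++ z⟩
  | move3 (g : L → α) (A B C : L) (x s₁ y s₂ z s₃ t : List (Option L))
      (hs₁ : Seps s₁) (hs₂ : Seps s₂) (hs₃ : Seps s₃)
      (hAB : g A = g B) (hBC : g B = g C) :
      Step τ ⟨g, x ++ [some A] ++ s₁ ++ [some B] ++ y ++ [some A] ++ s₂ ++ [some C] ++ z
                  ++ [some B] ++ s₃ ++ [some C] ++ t⟩
             ⟨g, x ++ [some B] ++ s₁ ++ [some A] ++ y ++ [some C] ++ s₂ ++ [some A] ++ z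
                  ++ [some C] ++ s₃ ++ [some B] ++ t⟩

/-- Homotopy of nanophrases (with the diagonal homotopy data): the equivalence
relation generated by isomorphisms and the three homotopy moves. -/
def Homotopic {α L : Type*} (τ : α → α) : NPhrase α L → NPhrase α L → Prop :=
  Relation.EqvGen (Step τ)

/-- Relations for the group `Π = ⟨ z_a (a ∈ α) ∣ z_a z_{τ(a)} = 1 ⟩`. -/
def gRels {α : Type*} (τ : α → α) : Set (FreeGroup α) :=
  {r | ∃ a : α, r = FreeGroup.of a * FreeGroup.of (τ a)}

/-- Relations for the abelian group `π = ⟨ a ∈ α ∣ a·τ(a) = 1, ab = ba ⟩`. -/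
def piRels {α : Type*} (τ : α → α) : Set (FreeGroup α) :=
  {r | (∃ a : α, r = FreeGroup.of a * FreeGroup.of (τ a)) ∨
    ∃ a b : α, r = FreeGroup.of a * FreeGroup.of b * (FreeGroup.of a)⁻¹ * (FreeGroup.of b)⁻¹}

/-- The value of `γ` on one component (a word), given the list `pre` of letters
of the phrase read before it: the ordered product of `z_{|X|}` at a first
occurrence and `z_{τ(|X|)}` at a second occurrence. -/
def gammaWord {α L : Type*} [DecidableEq L] (τ : α → α) (g : L → α) :
    List L → List L → PresentedGroup (gRels τ)
  | _, [] => 1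
  | pre, n :: l =>
      (if n ∈ pre then PresentedGroup.of (τ (g n)) else PresentedGroup.of (g n)) *
        gammaWord τ g (pre ++ [n]) l

/-- The `i`-th coordinate (0-indexed) of the invariant `γ` of a nanophrase. -/
def gammaCoord {α L : Type*} [DecidableEq L] (τ : α → α) (P : NPhrase α L) (i : ℕ) :
    PresentedGroup (gRels τ) :=
  gammaWord τ P.proj (((comps P.word).take i).flatten) ((comps P.word).getD i [])

/-- The pairing `(w_i, w_j)_P ∈ π`: the product of `|X|` over the letters `X`
occurring both in the `i`-th and in the `j`-th component (0-indexed). -/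
def pairing {α L : Type*} [DecidableEq L] (τ : α → α) (P : NPhrase α L) (i j : ℕ) :
    PresentedGroup (piRels τ) :=
  ((((comps P.word).getD i []).filter (fun x => x ∈ (comps P.word).getD j [])).map
    (fun x => PresentedGroup.of (P.proj x))).prod

/-- Merge the `l`-th and `(l+1)`-st components of a list of components. -/
def mergeAt {L : Type*} (l : ℕ) (cs : List (List L)) : List (List L) :=
  cs.take l ++ [cs.getD l [] ++ cs.getD (l + 1) []] ++ cs.drop (l + 2)

/-- The nanophrase `P_a^{1,1;p,q}` of length `k` (0-indexed components): the
letter `0` with `|0| = a` in components `p` and `q`, all other components empty. -/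
def stdPair {α : Type*} (k p q : ℕ) (a : α) : NPhrase α ℕ :=
  ⟨fun _ => a, ofComps ((List.range k).map fun i => if i = p ∨ i = q then [0] else [])⟩

/-- The nanoword `w_{a,b} = ABAB` with `|A| = a`, `|B| = b`, viewed as a
nanophrase of length 1. -/
def wab {α : Type*} (a b : α) : NPhrase α ℕ :=
  ⟨fun n => if n = 0 then a else b, [some 0, some 1, some 0, some 1]⟩

/-- The desingularization of an étale word `w`: each letter `A` of multiplicity
`m` is replaced, at its `i`-th occurrence (1-indexed), by
`A_{1,i} A_{2,i} ⋯ A_{i-1,i} A_{i,i+1} ⋯ A_{i,m}`, where `A_{i,j}` is encoded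
as `(A, i, j)`; letters of multiplicity 1 disappear. -/
def desing {L : Type*} [DecidableEq L] (w : List L) : List (L × ℕ × ℕ) :=
  ((List.range w.length).zip w).flatMap fun pA =>
    let A := pA.2
    let i := (w.take (pA.1 + 1)).count A
    let m := w.count A
    ((List.range (i - 1)).map fun t => (A, t + 1, i)) ++
      ((List.range (m - i)).map fun t => (A, i, i + 1 + t))

/-- Two étale words over `α` are homotopic if their desingularizations are
homotopic nanowords (nanophrases of length 1). -/
def EtaleHomotopic {α L : Type*} [DecidableEq L] (τ : α → α)
    (g₁ : L → α) (w₁ : List L) (g₂ : L → α) (w₂ : List L) : Prop :=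
  Homotopic τ (⟨fun t => g₁ t.1, (desing w₁).map some⟩ : NPhrase α (L × ℕ × ℕ))
    ⟨fun t => g₂ t.1, (desing w₂).map some⟩

end NPhrase

/-! After inserting two cancelling pairs by inverse second moves, one third move on `B` and
two inserted letters of the same label brings `A` next to an inserted letter `C` with
`|C| = b`, in the position `C A ⋯ A C` of a second move; `A` is removed with `C`, and what
is left cancels by first and second moves. -/

namespace NPhrase

variable {α L : Type*} {τ : α → α}

local infix:50 " ~ " => Homotopic τ

theorem Homotopic.symm {P Q : NPhrase α L} (h : P ~ Q) : Q ~ P :=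
  Relation.EqvGen.symm P Q h

theorem Homotopic.trans {P Q R : NPhrase α L} (h₁ : P ~ Q) (h₂ : Q ~ R) : P ~ R :=
  Relation.EqvGen.trans P Q R h₁ h₂

instance : Trans (Homotopic τ : NPhrase α L → NPhrase α L → Prop) (Homotopic τ)
    (Homotopic τ) :=
  ⟨Homotopic.trans⟩

theorem Step.homotopic {P Q : NPhrase α L} (h : Step τ P Q) : P ~ Q :=
  Relation.EqvGen.rel P Q h

theorem homotopic_of_eqOn_letters {g g' : L → α} {w : List (Option L)}
    (h : ∀ x ∈ letters w, g x = g' x) : (⟨g, w⟩ : NPhrase α L) ~ ⟨g', w⟩ := by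
  simpa using (Step.iso (τ := τ) g g' w (Equiv.refl L) fun x hx => (h x hx).symm).homotopic

theorem seps_nil : Seps ([] : List (Option L)) := fun _ h => absurd h List.not_mem_nil

def ofWord (g : L → α) (w : List L) : NPhrase α L := ⟨g, w.map some⟩

theorem homotopic_move1 (g : L → α) (A : L) (x y : List L) :
    ofWord g (x ++ A :: A :: y) ~ ofWord g (x ++ y) := by
  simpa [ofWord] using (Step.move1 (τ := τ) g A (x.map some) [] (y.map some) seps_nil).homotopic

theorem homotopic_move2 {g : L → α} (A B : L) (x y z : List L) (h : g B = τ (g A)) :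
    ofWord g (x ++ A :: B :: y ++ B :: A :: z) ~ ofWord g (x ++ y ++ z) := by
  simpa [ofWord] using (Step.move2 (τ := τ) g A B (x.map some) [] (y.map some) []
    (z.map some) seps_nil seps_nil h).homotopic

theorem homotopic_move3 {g : L → α} (A B C : L) (x y z t : List L) (hAB : g A = g B)
    (hBC : g B = g C) :
    ofWord g (x ++ A :: B :: y ++ A :: C :: z ++ B :: C :: t) ~
      ofWord g (x ++ B :: A :: y ++ C :: A :: z ++ C :: B :: t) := by
  simpa [ofWord] using (Step.move3 (τ := τ) g A B C (x.map some) [] (y.map some) []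
    (z.map some) [] (t.map some) seps_nil seps_nil seps_nil hAB hBC).homotopic

def parityProj (a b : α) (n : ℕ) : α := if n % 2 = 0 then a else b

theorem homotopic_abab_nil (hτ : Function.Involutive τ) {a b : α} (hab : a = τ b) :
    ofWord (parityProj a b) [0, 1, 0, 1] ~ ofWord (parityProj a b) [] := by
  have hba : b = τ a := by rw [hab, hτ]
  set p := parityProj a b
  calc ofWord p [0, 1, 0, 1] ~ ofWord p [2, 3, 0, 1, 3, 2, 0, 1] :=
        (homotopic_move2 2 3 [] [0, 1] [0, 1] hba).symm
    _ ~ ofWord p [2, 4, 5, 3, 0, 1, 3, 2, 0, 1, 5, 4] :=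
        (homotopic_move2 4 5 [2] [3, 0, 1, 3, 2, 0, 1] [] hba).symm
    _ ~ ofWord p [2, 4, 3, 5, 0, 3, 1, 2, 0, 5, 1, 4] :=
        (homotopic_move3 3 5 1 [2, 4] [0] [2, 0] [4] rfl rfl).symm
    _ ~ ofWord p [2, 4, 3, 3, 1, 2, 1, 4] := homotopic_move2 5 0 [2, 4, 3] [3, 1, 2] [1, 4] hab
    _ ~ ofWord p [2, 4, 1, 2, 1, 4] := homotopic_move1 p 3 [2, 4] [1, 2, 1, 4]
    _ ~ ofWord p [2, 2] := homotopic_move2 4 1 [2] [2] [] hba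
    _ ~ ofWord p [] := homotopic_move1 p 2 [] []

end NPhrase

open NPhrase in
theorem ABAB_contractible_general {α : Type*} (τ : α → α)
    (hτ : Function.Involutive τ) (a b : α) (hab : a = τ b)
    (g : ℕ → α) (hg0 : g 0 = a) (hg1 : g 1 = b) :
    Homotopic τ (⟨g, [some 0, some 1, some 0, some 1]⟩ : NPhrase α ℕ)
      ⟨g, ([] : List (Option ℕ))⟩ := by
  have hletters : ∀ x ∈ letters [some 0, some 1, some 0, some 1], g x = parityProj a b x := by
    simp [letters, parityProj, hg0, hg1]
  exact ((homotopic_of_eqOn_letters hletters).trans (homotopic_abab_nil hτ hab)).trans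
    (homotopic_of_eqOn_letters (by simp [letters]))

open NPhrase in
/-- if `a = τ(b)`, the nanoword `ABAB` with `|A| = a`, `|B| = b`
is homotopic to the empty nanoword. -/
theorem ABAB_contractible {α : Type*} [Fintype α] (τ : α → α)
    (hτ : Function.Involutive τ) (a b : α) (hab : a = τ b)
    (g : ℕ → α) (hg0 : g 0 = a) (hg1 : g 1 = b) :
    Homotopic τ (⟨g, [some 0, some 1, some 0, some 1]⟩ : NPhrase α ℕ)
      ⟨g, ([] : List (Option ℕ))⟩ :=
  ABAB_contractible_general τ hτ a b hab g hg0 hg1
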